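/- arXiv:1811.03295 — 2 statements merged into one kernel-verified Lean document; each statement's English description precedes it below -/
import Mathlib

section
/- Let g = Σ_i g_i m_i be a polynomial of degree at most k on an (n-j)-dimensional face F of diameter h_F, expanded in the scaled monomial basis M_k(F) = {((x - x_F)/h_F)^α : α ∈ A_{n-j}, |α| ≤ k}. Then the norm equivalence h_F^{(n-j)/2} ‖g⃗‖_{ℓ²} ≲ ‖g‖_{0,F} ≲ h_F^{(n-j)/2} ‖g⃗‖_{ℓ²} holds, where g⃗ = (g_i) is the coefficient vector and the constants depend only on k, n, j, and the chunkiness parameter of F. -/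
open MeasureTheory
noncomputable section

abbrev Eu (d : ℕ) := EuclideanSpace ℝ (Fin d)

open Metric

/-!
Rescaling `x = x₀ + h y` maps the ball `B(x₀, ρ h) ⊆ F` onto a fixed ball and turns `g` into a
polynomial in `y` with the same coefficient vector `g⃗`, centred at `z = (x_F - x₀) / h`; here
`‖z‖ ≤ 1` because every point of `F` lies within `h` of the centroid. The squared `L²` norm over
the fixed ball is continuous in `(z, g⃗)`, homogeneous of degree 2 in `g⃗`, and positive for
`g⃗ ≠ 0` since a polynomial vanishing on an open set is zero, so compactness of
`{‖z‖ ≤ 1} × {‖g⃗‖ = 1}` gives the lower bound, the Jacobian contributing `h^d`. For the upper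
bound every scaled monomial is at most 1 in absolute value on `F`, so Cauchy–Schwarz and
`|F| ≤ |B(x_F, h)| = |B(0, 1)| h^d` suffice.
-/

theorem MvPolynomial.eq_zero_of_eval_eq_zero_on_isOpen {σ : Type*} [Finite σ]
    {p : MvPolynomial σ ℝ} {U : Set (σ → ℝ)} (hU : IsOpen U) (hne : U.Nonempty)
    (h : ∀ x ∈ U, MvPolynomial.eval x p = 0) : p = 0 := by
  have := Fintype.ofFinite σ
  obtain ⟨x, hx⟩ := hne
  obtain ⟨ε, hε, hball⟩ := Metric.isOpen_iff.1 hU x hx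
  refine funext_set (fun i => ball (x i) ε) (fun i => ?_) fun y hy => ?_
  · rw [Real.ball_eq_Ioo]
    exact Set.Ioo_infinite (by linarith)
  · rw [map_zero]
    exact h y (hball (by rwa [ball_pi x hε]))

theorem Real.sqrt_pow_mul_mul {h a : ℝ} (hh : 0 ≤ h) (ha : 0 ≤ a) (n : ℕ) (s : ℝ) :
    √(h ^ n * (a * s)) = √a * h ^ ((n : ℝ) / 2) * √s := by
  rw [Real.sqrt_mul (by positivity), Real.sqrt_mul ha, Real.sqrt_eq_rpow, ← Real.rpow_natCast,
    ← Real.rpow_mul hh, mul_one_div]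
  ring

theorem exists_pos_mul_norm_sq_le {Z E : Type*} [TopologicalSpace Z] [NormedAddCommGroup E]
    [NormedSpace ℝ E] [ProperSpace E] {K : Set Z} (hK : IsCompact K) {Φ : Z → E → ℝ}
    (hcont : Continuous (Function.uncurry Φ)) (hpos : ∀ z ∈ K, ∀ c ≠ 0, 0 < Φ z c)
    (hhom : ∀ z (t : ℝ) c, Φ z (t • c) = t ^ 2 * Φ z c) :
    ∃ ε > 0, ∀ z ∈ K, ∀ c, ε * ‖c‖ ^ 2 ≤ Φ z c := by
  obtain ⟨ε, hε, hmin⟩ := (hK.prod (isCompact_sphere (0 : E) 1)).exists_forall_le'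
    hcont.continuousOn (a := 0) fun q hq =>
      hpos q.1 hq.1 q.2 (ne_zero_of_mem_unit_sphere ⟨q.2, hq.2⟩)
  refine ⟨ε, hε, fun z hz c => ?_⟩
  rcases eq_or_ne c 0 with rfl | hc
  · simpa using (hhom z 0 0).ge
  · have hunit : ‖c‖⁻¹ • c ∈ sphere (0 : E) 1 := by
      simp [norm_smul, hc]
    calc ε * ‖c‖ ^ 2 ≤ ‖c‖ ^ 2 * Φ z (‖c‖⁻¹ • c) := by
          rw [mul_comm]; exact mul_le_mul_of_nonneg_left (hmin (z, _) ⟨hz, hunit⟩) (by positivity)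
      _ = Φ z c := by rw [← hhom, smul_smul, mul_inv_cancel₀ (norm_ne_zero_iff.2 hc), one_smul]

theorem setIntegral_closedBall_eq_pow_mul {E F : Type*} [NormedAddCommGroup E] [NormedSpace ℝ E]
    [FiniteDimensional ℝ E] [MeasurableSpace E] [BorelSpace E] [NormedAddCommGroup F]
    [NormedSpace ℝ F] (μ : Measure E) [μ.IsAddHaarMeasure] (f : E → F) (x₀ : E) {h r : ℝ}
    (hh : 0 < h) (hr : 0 ≤ r) :
    ∫ x in closedBall x₀ (h * r), f x ∂μ =
      h ^ Module.finrank ℝ E • ∫ y in closedBall 0 r, f (x₀ + h • y) ∂μ := by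
  rw [Measure.setIntegral_comp_smul_of_pos μ (fun y => f (x₀ + y)) _ hh, smul_inv_smul₀
    (by positivity), smul_closedBall _ _ hr, smul_zero, Real.norm_of_nonneg hh.le,
    ← (measurePreserving_add_left μ x₀).setIntegral_preimage_emb
      (measurableEmbedding_addLeft x₀), preimage_add_closedBall, sub_self]

theorem subset_closedBall_diam_of_setIntegral_sub_eq_zero {E : Type*} [NormedAddCommGroup E]
    [NormedSpace ℝ E] [CompleteSpace E] [MeasurableSpace E] {μ : Measure E} {F : Set E} {xF : E}
    (hF0 : μ F ≠ 0) (hFfin : μ F ≠ ⊤) (hFb : Bornology.IsBounded F)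
    (hint : IntegrableOn (fun x => x - xF) F μ) (hc : ∫ x in F, (x - xF) ∂μ = 0) :
    F ⊆ closedBall xF (diam F) := by
  intro x hx
  have hmean : ∫ y in F, (x - y) ∂μ = μ.real F • (x - xF) := by
    rw [← integral_congr_ae
        (Filter.Eventually.of_forall fun y => sub_sub_sub_cancel_right x y xF),
      integral_sub (integrableOn_const (C := x - xF) hFfin) hint, hc, sub_zero, setIntegral_const]
  have hbound := norm_setIntegral_le_of_norm_le_const hFfin.lt_top
    fun y hy => (dist_eq_norm x y ▸ dist_le_diam_of_mem hFb hx hy)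
  have hpos : 0 < μ.real F := ENNReal.toReal_pos hF0 hFfin
  rw [hmean, norm_smul, Real.norm_of_nonneg hpos.le, mul_comm] at hbound
  rw [mem_closedBall, dist_eq_norm]
  exact le_of_mul_le_mul_right hbound hpos

theorem EuclideanSpace.subset_closedBall_diam_of_centroid {d : ℕ} {F : Set (Eu d)}
    (hFo : IsOpen F) (hFb : Bornology.IsBounded F) (hFne : F.Nonempty) {xF : Eu d}
    (hc : ∀ i : Fin d, ∫ x in F, (x i - xF i) = 0) : F ⊆ closedBall xF (diam F) := by
  have hint : IntegrableOn (fun x => x - xF) F :=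
    ((continuous_id.sub continuous_const).continuousOn.integrableOn_compact
      hFb.isCompact_closure).mono_set subset_closure
  refine subset_closedBall_diam_of_setIntegral_sub_eq_zero (hFo.measure_pos volume hFne).ne'
    hFb.measure_lt_top.ne hFb hint ?_
  ext i
  have := (EuclideanSpace.proj (𝕜 := ℝ) i).integral_comp_comm hint
  simp only [PiLp.proj_apply] at this
  simpa [← this] using hc i

namespace ScaledMonomial

variable {d k : ℕ}

variable (d k) in
def indices : Finset (Fin d → Fin (k + 1)) :=
  Finset.univ.filter fun α => ∑ i, (α i : ℕ) ≤ k

def exponent (α : Fin d → Fin (k + 1)) : Fin d →₀ ℕ :=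
  Finsupp.equivFunOnFinite.symm fun i => α i

lemma exponent_injective : Function.Injective (exponent (d := d) (k := k)) := fun _ _ h =>
  funext fun i => Fin.ext (congr_fun (Finsupp.equivFunOnFinite.symm.injective h) i)

def toMvPolynomial (c : EuclideanSpace ℝ (indices d k)) : MvPolynomial (Fin d) ℝ :=
  ∑ α, MvPolynomial.monomial (exponent α.1) (c α)

lemma coeff_toMvPolynomial (c : EuclideanSpace ℝ (indices d k)) (α : indices d k) :
    (toMvPolynomial c).coeff (exponent α.1) = c α := by
  classical
  simp only [toMvPolynomial, MvPolynomial.coeff_sum, MvPolynomial.coeff_monomial,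
    exponent_injective.eq_iff, Subtype.val_inj]
  simp

def shiftedEval (c : EuclideanSpace ℝ (indices d k)) (z y : Eu d) : ℝ :=
  ∑ α, c α * ∏ i, (y i - z i) ^ (α.1 i : ℕ)

lemma shiftedEval_eq_eval (c : EuclideanSpace ℝ (indices d k)) (z y : Eu d) :
    shiftedEval c z y = MvPolynomial.eval (fun i => y i - z i) (toMvPolynomial c) := by
  simp [shiftedEval, toMvPolynomial, MvPolynomial.eval_monomial, Finsupp.prod_fintype, exponent]

lemma shiftedEval_smul (t : ℝ) (c : EuclideanSpace ℝ (indices d k)) (z y : Eu d) :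
    shiftedEval (t • c) z y = t * shiftedEval c z y := by
  simp [shiftedEval, Finset.mul_sum, mul_assoc]

lemma eq_zero_of_shiftedEval_eq_zero {c : EuclideanSpace ℝ (indices d k)} {z : Eu d} {r : ℝ}
    (hr : 0 < r) (h : ∀ y ∈ ball 0 r, shiftedEval c z y = 0) : c = 0 := by
  have hpoly : toMvPolynomial c = 0 := by
    refine MvPolynomial.eq_zero_of_eval_eq_zero_on_isOpen
      (U := (fun v => WithLp.toLp 2 v + z) ⁻¹' ball 0 r) (isOpen_ball.preimage (by fun_prop))
      ⟨-WithLp.ofLp z, by simpa using hr⟩ fun v hv => ?_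
    simpa [shiftedEval_eq_eval] using h _ hv
  ext α
  simpa [hpoly] using (coeff_toMvPolynomial c α).symm

lemma integral_shiftedEval_sq_pos {r : ℝ} (hr : 0 < r) {c : EuclideanSpace ℝ (indices d k)}
    (hc : c ≠ 0) (z : Eu d) : 0 < ∫ y in closedBall 0 r, shiftedEval c z y ^ 2 := by
  have hcont : Continuous fun y => shiftedEval c z y ^ 2 := by
    unfold shiftedEval; fun_prop
  obtain ⟨y₀, hy₀, hne⟩ : ∃ y ∈ ball 0 r, shiftedEval c z y ≠ 0 := by
    by_contra! h
    exact hc (eq_zero_of_shiftedEval_eq_zero hr h)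
  rw [setIntegral_pos_iff_support_of_nonneg_ae (Filter.Eventually.of_forall fun _ => sq_nonneg _)
    (hcont.continuousOn.integrableOn_compact (isCompact_closedBall 0 r))]
  exact ((hcont.isOpen_support.inter isOpen_ball).measure_pos volume
    ⟨y₀, pow_ne_zero 2 hne, hy₀⟩).trans_le
    (measure_mono (Set.inter_subset_inter_right _ ball_subset_closedBall))

lemma exists_pos_mul_norm_sq_le_integral_shiftedEval {r : ℝ} (hr : 0 < r) :
    ∃ ε > 0, ∀ z ∈ closedBall (0 : Eu d) 1, ∀ c : EuclideanSpace ℝ (indices d k),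
      ε * ‖c‖ ^ 2 ≤ ∫ y in closedBall 0 r, shiftedEval c z y ^ 2 := by
  refine exists_pos_mul_norm_sq_le (isCompact_closedBall 0 1) ?_
    (fun z _ c hc => integral_shiftedEval_sq_pos hr hc z) fun z t c => ?_
  · exact continuous_parametric_integral_of_continuous (by unfold shiftedEval; fun_prop)
      (isCompact_closedBall 0 r)
  · simp_rw [shiftedEval_smul, mul_pow]
    exact integral_const_mul _ _

def expansion (h : ℝ) (xF : Eu d) (coeff : (Fin d → Fin (k + 1)) → ℝ) (x : Eu d) : ℝ :=
  ∑ α ∈ indices d k, coeff α * ∏ i, ((x i - xF i) / h) ^ (α i : ℕ)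

def coeffVec (coeff : (Fin d → Fin (k + 1)) → ℝ) : EuclideanSpace ℝ (indices d k) :=
  WithLp.toLp 2 fun α => coeff α

lemma norm_coeffVec (coeff : (Fin d → Fin (k + 1)) → ℝ) :
    ‖coeffVec coeff‖ = √(∑ α ∈ indices d k, coeff α ^ 2) := by
  simp [coeffVec, EuclideanSpace.norm_eq, Finset.sum_attach (indices d k) fun α => coeff α ^ 2]

lemma expansion_add_smul {h : ℝ} (hh : h ≠ 0) (xF x₀ y : Eu d)
    (coeff : (Fin d → Fin (k + 1)) → ℝ) :
    expansion h xF coeff (x₀ + h • y) = shiftedEval (coeffVec coeff) (h⁻¹ • (xF - x₀)) y := by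
  rw [expansion, shiftedEval, ← Finset.sum_coe_sort]
  refine Finset.sum_congr rfl fun α _ => congr_arg _ (Finset.prod_congr rfl fun i _ => ?_)
  simp
  field_simp
  ring

lemma setIntegral_expansion_sq_of_dim_zero {F : Set (Eu 0)} (hF : F.Nonempty) (h : ℝ)
    (xF : Eu 0) (coeff : (Fin 0 → Fin (k + 1)) → ℝ) :
    ∫ x in F, expansion h xF coeff x ^ 2 = ∑ α ∈ indices 0 k, coeff α ^ 2 := by
  obtain ⟨x, hx⟩ := hF
  obtain rfl : F = Set.univ := Set.eq_univ_of_forall fun y => Subsingleton.elim x y ▸ hx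
  have hvol : volume (Set.univ : Set (Eu 0)) = 1 := by
    simpa [volume_pi] using
      (EuclideanSpace.volume_preserving_symm_measurableEquiv_toLp (Fin 0)).measure_preimage
        (MeasurableSet.univ (α := Fin 0 → ℝ)).nullMeasurableSet
  simp [expansion, indices, Measure.real, hvol]

lemma abs_expansion_le {h : ℝ} {xF x : Eu d} (hx : dist x xF ≤ h)
    (coeff : (Fin d → Fin (k + 1)) → ℝ) :
    |expansion h xF coeff x| ≤ ∑ α ∈ indices d k, |coeff α| := by
  refine (Finset.abs_sum_le_sum_abs _ _).trans (Finset.sum_le_sum fun α _ => ?_)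
  rw [abs_mul, Finset.abs_prod]
  refine mul_le_of_le_one_right (abs_nonneg _)
    (Finset.prod_le_one (fun _ _ => abs_nonneg _) fun i _ => ?_)
  rw [abs_pow, abs_div]
  refine pow_le_one₀ (by positivity) (div_le_one_of_le₀ ?_ (abs_nonneg h))
  calc |x i - xF i| ≤ ‖x - xF‖ := PiLp.norm_apply_le (x - xF) i
    _ ≤ |h| := (dist_eq_norm x xF ▸ hx).trans (le_abs_self h)

theorem exists_upper_bound (d k : ℕ) :
    ∃ C > 0, ∀ h, 0 ≤ h → ∀ (F : Set (Eu d)) (xF : Eu d), F ⊆ closedBall xF h →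
      ∀ coeff : (Fin d → Fin (k + 1)) → ℝ,
        √(∫ x in F, expansion h xF coeff x ^ 2) ≤
          C * h ^ ((d : ℝ) / 2) * √(∑ α ∈ indices d k, coeff α ^ 2) := by
  set N : ℝ := ((indices d k).card : ℝ)
  set ω : ℝ := volume.real (ball (0 : Eu d) 1)
  have hN : 0 < N := Nat.cast_pos.2 (Finset.card_pos.2 ⟨0, by simp [indices]⟩)
  have hω : 0 < ω := ENNReal.toReal_pos (measure_ball_pos volume _ one_pos).ne'
    measure_ball_lt_top.ne
  refine ⟨√(N * ω), Real.sqrt_pos.2 (mul_pos hN hω), fun h hh F xF hF coeff => ?_⟩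
  set S := ∑ α ∈ indices d k, coeff α ^ 2
  have hpointwise : ∀ x ∈ F, ‖expansion h xF coeff x ^ 2‖ ≤ N * S := fun x hx => by
    rw [Real.norm_of_nonneg (sq_nonneg _), ← sq_abs]
    calc |expansion h xF coeff x| ^ 2 ≤ (∑ α ∈ indices d k, |coeff α|) ^ 2 :=
          pow_le_pow_left₀ (abs_nonneg _) (abs_expansion_le (mem_closedBall.1 (hF hx)) coeff) 2
      _ ≤ N * S := by
          simpa only [sq_abs] using
            sq_sum_le_card_mul_sum_sq (s := indices d k) (f := fun α => |coeff α|)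
  have hvol : volume.real (closedBall xF h) = h ^ d * ω := by
    rw [measureReal_def, Measure.addHaar_closedBall _ _ hh, finrank_euclideanSpace_fin,
      ENNReal.toReal_mul, ENNReal.toReal_ofReal (by positivity)]
    rfl
  have hint : ∫ x in F, expansion h xF coeff x ^ 2 ≤ h ^ d * (N * ω * S) :=
    calc ∫ x in F, expansion h xF coeff x ^ 2
        ≤ N * S * volume.real F := (Real.le_norm_self _).trans
          (norm_setIntegral_le_of_norm_le_const
            ((measure_mono hF).trans_lt measure_closedBall_lt_top) hpointwise)
      _ ≤ N * S * volume.real (closedBall xF h) := by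
          gcongr
          exact measure_closedBall_lt_top.ne
      _ = h ^ d * (N * ω * S) := by rw [hvol]; ring
  exact (Real.sqrt_le_sqrt hint).trans_eq (Real.sqrt_pow_mul_mul hh (by positivity) d S)

theorem exists_lower_bound (d k : ℕ) {ρ : ℝ} (hρ : 0 < ρ) :
    ∃ c > 0, ∀ h, 0 ≤ h → ∀ F : Set (Eu d), F.Nonempty → ∀ x₀ xF : Eu d,
      ball x₀ (ρ * h) ⊆ F → F ⊆ closedBall xF h → ∀ coeff : (Fin d → Fin (k + 1)) → ℝ,
        c * h ^ ((d : ℝ) / 2) * √(∑ α ∈ indices d k, coeff α ^ 2) ≤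
          √(∫ x in F, expansion h xF coeff x ^ 2) := by
  rcases Nat.eq_zero_or_pos d with rfl | hd
  · exact ⟨1, one_pos, fun h _ F hF _ _ _ _ coeff => by
      simp [setIntegral_expansion_sq_of_dim_zero hF]⟩
  obtain ⟨ε, hε, hmin⟩ :=
    exists_pos_mul_norm_sq_le_integral_shiftedEval (d := d) (k := k) (half_pos hρ)
  refine ⟨√ε, Real.sqrt_pos.2 hε, fun h hh F _ x₀ xF hball hF coeff => ?_⟩
  rcases hh.eq_or_lt with rfl | hh
  · simp [Real.zero_rpow (by positivity : (d : ℝ) / 2 ≠ 0)]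
  set S := ∑ α ∈ indices d k, coeff α ^ 2
  have hx₀ : x₀ ∈ F := hball (mem_ball_self (by positivity))
  have hz : h⁻¹ • (xF - x₀) ∈ closedBall (0 : Eu d) 1 := by
    rw [mem_closedBall_zero_iff, norm_smul, norm_inv, Real.norm_of_nonneg hh.le,
      inv_mul_le_one₀ hh, ← dist_eq_norm, dist_comm]
    exact hF hx₀
  have hsmall : closedBall x₀ (h * (ρ / 2)) ⊆ F :=
    (closedBall_subset_ball (by nlinarith)).trans hball
  have hcont : Continuous fun x => expansion h xF coeff x ^ 2 := by
    unfold expansion; fun_prop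
  have hint : IntegrableOn (fun x => expansion h xF coeff x ^ 2) F :=
    (hcont.continuousOn.integrableOn_compact (isCompact_closedBall xF h)).mono_set hF
  have key : h ^ d * (ε * S) ≤ ∫ x in F, expansion h xF coeff x ^ 2 :=
    calc h ^ d * (ε * S)
        = h ^ d * (ε * ‖coeffVec coeff‖ ^ 2) := by
          rw [norm_coeffVec, Real.sq_sqrt (Finset.sum_nonneg fun _ _ => sq_nonneg _)]
      _ ≤ h ^ d * ∫ y in closedBall 0 (ρ / 2),
            shiftedEval (coeffVec coeff) (h⁻¹ • (xF - x₀)) y ^ 2 := by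
          gcongr
          exact hmin _ hz _
      _ = ∫ x in closedBall x₀ (h * (ρ / 2)), expansion h xF coeff x ^ 2 := by
          rw [setIntegral_closedBall_eq_pow_mul volume _ x₀ hh (by positivity),
            finrank_euclideanSpace_fin, smul_eq_mul]
          simp_rw [expansion_add_smul hh.ne']
      _ ≤ ∫ x in F, expansion h xF coeff x ^ 2 :=
          setIntegral_mono_set hint (Filter.Eventually.of_forall fun _ => sq_nonneg _)
            hsmall.eventuallyLE
  exact (Real.sqrt_pow_mul_mul hh.le hε.le d S).symm.trans_le (Real.sqrt_le_sqrt key)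

end ScaledMonomial

-- `d` stands for `n - j`, and a multi-index `α` with `|α| ≤ k` is encoded as
-- `α : Fin d → Fin (k + 1)` with `∑ i, α i ≤ k`.
open ScaledMonomial in
/-- Norm equivalence between the `L²(F)` norm of a polynomial expanded in the scaled
monomial basis `M_k(F) = {((x - x_F)/h_F)^α : |α| ≤ k}` and the `ℓ²` norm of its
coefficient vector: `h_F^{d/2} ‖g⃗‖_{ℓ²} ≂ ‖g‖_{0,F}`, with constants depending only on
the dimension `d` (`= n - j` after identifying the `(n-j)`-dimensional face `F` with a
subset of `ℝ^{n-j}`), the degree `k`, and the chunkiness parameter `ρ` of `F`; `x_F` is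
the centroid of `F` and `h_F = diam F`.  The exponents are indexed by the finite set
`A = {α : Fin d → Fin (k+1), Σ α_i ≤ k}`. -/
theorem stmt18 (d k : ℕ) (ρ : ℝ) (hρ : 0 < ρ) :
    ∃ c > 0, ∃ C > 0, ∀ F : Set (Eu d), IsOpen F → Bornology.IsBounded F → F.Nonempty →
      (∃ x₀ : Eu d, Metric.ball x₀ (ρ * Metric.diam F) ⊆ F ∧
        ∀ x ∈ F, ∀ y ∈ Metric.ball x₀ (ρ * Metric.diam F), segment ℝ x y ⊆ F) →
      ∀ xF : Eu d,
        -- `x_F` is the centroid of `F`: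
        (∀ i : Fin d, ∫ x in F, (x i - xF i) = 0) →
      ∀ coeff : (Fin d → Fin (k + 1)) → ℝ,
        (c * Metric.diam F ^ ((d : ℝ) / 2) *
            Real.sqrt (∑ α ∈ Finset.univ.filter
                (fun α : Fin d → Fin (k + 1) => ∑ i, (α i : ℕ) ≤ k), coeff α ^ 2)
          ≤ Real.sqrt (∫ x in F,
              (∑ α ∈ Finset.univ.filter
                  (fun α : Fin d → Fin (k + 1) => ∑ i, (α i : ℕ) ≤ k),
                coeff α * ∏ i, ((x i - xF i) / Metric.diam F) ^ (α i : ℕ)) ^ 2)) ∧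
        Real.sqrt (∫ x in F,
            (∑ α ∈ Finset.univ.filter
                (fun α : Fin d → Fin (k + 1) => ∑ i, (α i : ℕ) ≤ k),
              coeff α * ∏ i, ((x i - xF i) / Metric.diam F) ^ (α i : ℕ)) ^ 2)
          ≤ C * Metric.diam F ^ ((d : ℝ) / 2) *
            Real.sqrt (∑ α ∈ Finset.univ.filter
                (fun α : Fin d → Fin (k + 1) => ∑ i, (α i : ℕ) ≤ k), coeff α ^ 2) := by
  obtain ⟨c, hc, hlower⟩ := exists_lower_bound d k hρ
  obtain ⟨C, hC, hupper⟩ := exists_upper_bound d k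
  refine ⟨c, hc, C, hC, fun F hFo hFb hFne ⟨x₀, hball, _⟩ xF hxF coeff => ?_⟩
  have hF := EuclideanSpace.subset_closedBall_diam_of_centroid hFo hFb hFne hxF
  exact ⟨hlower _ diam_nonneg F hFne x₀ xF hball hF coeff, hupper _ diam_nonneg F xF hF coeff⟩
end
end

section
/- For 2m ≤ k < 3m-1, let W_k(K) be the modified virtual element space defined by the constraint (v - Π^K v, q)_K = 0 for all q in the L²-orthogonal complement P⊥_{k-2m}(K) of P_{k-2m}(K) within P_{m-1}(K). Then for every v ∈ W_k(K), the L² projection onto P_{m-1}(K) is computable via Q_{m-1}^K v = Q_{k-2m}^K v + Q_{m-1}^K Π^K v - Q_{k-2m}^K Π^K v. -/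
open scoped RealInnerProductSpace
noncomputable section

namespace Submodule

variable {𝕜 E : Type*} [RCLike 𝕜] [NormedAddCommGroup E] [InnerProductSpace 𝕜 E]

/-- Since `V = U ⊔ (Uᗮ ⊓ V)`, the complement `Vᗮ` is `Uᗮ ⊓ (Uᗮ ⊓ V)ᗮ`, and `w - P_U w` lies in
both factors. -/
theorem starProjection_eq_of_le_of_mem_orthogonal_inf {U V : Submodule 𝕜 E}
    [U.HasOrthogonalProjection] [V.HasOrthogonalProjection] (hUV : U ≤ V) {w : E}
    (hw : w ∈ (Uᗮ ⊓ V)ᗮ) : V.starProjection w = U.starProjection w := by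
  have hU : U ≤ (Uᗮ ⊓ V)ᗮ := U.le_orthogonal_orthogonal.trans (orthogonal_le inf_le_left)
  have hV_orthogonal : Vᗮ = Uᗮ ⊓ (Uᗮ ⊓ V)ᗮ := by
    rw [inf_orthogonal, sup_orthogonal_inf_of_hasOrthogonalProjection hUV]
  refine eq_starProjection_of_mem_orthogonal (hUV (U.starProjection_apply_mem w)) ?_
  rw [hV_orthogonal]
  exact ⟨U.sub_starProjection_mem_orthogonal w, sub_mem hw (hU (U.starProjection_apply_mem w))⟩

end Submodule

theorem stmt19_general {L : Type*} [NormedAddCommGroup L] [InnerProductSpace ℝ L]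
    (P₁ P₂ : Submodule ℝ L) [FiniteDimensional ℝ P₁] [FiniteDimensional ℝ P₂]
    (hsub : P₂ ≤ P₁)
    (v Pv : L)
    (hconstraint : ∀ q ∈ P₁, (Submodule.orthogonalProjectionOnto P₂ q : L) = 0 → ⟪v - Pv, q⟫ = 0) :
    (Submodule.orthogonalProjectionOnto P₁ v : L)
      = (Submodule.orthogonalProjectionOnto P₂ v : L) + (Submodule.orthogonalProjectionOnto P₁ Pv : L)
        - (Submodule.orthogonalProjectionOnto P₂ Pv : L) := by
  have hw : v - Pv ∈ (P₂ᗮ ⊓ P₁)ᗮ := (Submodule.mem_orthogonal' _ _).2 fun q hq =>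
    hconstraint q hq.2 <| Submodule.coe_eq_zero.2 <|
      Submodule.orthogonalProjectionOnto_eq_zero_iff.2 hq.1
  have key := Submodule.starProjection_eq_of_le_of_mem_orthogonal_inf hsub hw
  simp only [map_sub, Submodule.starProjection_apply] at key
  rw [add_sub_right_comm, ← key]
  abel

/-- Computability of the `L²` projection onto `P_{m-1}(K)` in the modified virtual
element space `W_k(K)` for `2m ≤ k < 3m-1`.  Abstract setting in the Hilbert space
`L = L²(K)`: `P₁` is (the image in `L` of) `P_{m-1}(K)`, `P₂ ≤ P₁` is `P_{k-2m}(K)`,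
`Q₁ = Q_{m-1}^K` and `Q₂ = Q_{k-2m}^K` are the corresponding orthogonal projections,
and `Pv` denotes `Π^K v ∈ L`.  The defining constraint of `W_k(K)` is that `v - Π^K v`
is `L²`-orthogonal to the orthogonal complement `P⊥_{k-2m}(K)` of `P₂` within `P₁`.
Then `Q_{m-1}^K v = Q_{k-2m}^K v + Q_{m-1}^K Π^K v - Q_{k-2m}^K Π^K v`. -/
theorem stmt19 {L : Type*} [NormedAddCommGroup L] [InnerProductSpace ℝ L]
    (m k : ℕ) (hk₁ : 2 * m ≤ k) (hk₂ : k < 3 * m - 1)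
    (P₁ P₂ : Submodule ℝ L) [FiniteDimensional ℝ P₁] [FiniteDimensional ℝ P₂]
    (hsub : P₂ ≤ P₁)
    (v Pv : L)
    (hconstraint : ∀ q ∈ P₁, (Submodule.orthogonalProjectionOnto P₂ q : L) = 0 → ⟪v - Pv, q⟫ = 0) :
    (Submodule.orthogonalProjectionOnto P₁ v : L)
      = (Submodule.orthogonalProjectionOnto P₂ v : L) + (Submodule.orthogonalProjectionOnto P₁ Pv : L)
        - (Submodule.orthogonalProjectionOnto P₂ Pv : L) :=
  stmt19_general P₁ P₂ hsub v Pv hconstraint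
end
end
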